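/- Let $(g_j)$ be an orthonormal sequence in $L^2(\mathbb{S}^{n-1})$, $(\lambda_j) \in \ell^2$ real, $w$ a real-valued Schwartz function on $\mathbb{R}^n$, and $K$ a measurable subset of $\mathbb{S}^{n-1}$ containing $\bigcup_j \mathrm{supp}(g_j)$. Then $\left| \sum_j \lambda_j \int_{\mathbb{R}^n} |\widehat{g_j\mathrm{d}\sigma}(x)|^2 w(x)\,\mathrm{d}x \right| \leq \|(\lambda_j)\|_{\ell^2} \left( \int_{\mathbb{S}^{n-1}}\int_{\mathbb{S}^{n-1}} |\widehat{w}(\theta-\omega)|^2\,\mathrm{d}\sigma_K(\omega)\mathrm{d}\sigma_K(\theta) \right)^{1/2}$, where $\sigma_K = \mathbf{1}_K\mathrm{d}\sigma$. -/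

import Mathlib

open MeasureTheory Complex Real Function
open scoped InnerProductSpace MeasureTheory ENNReal


noncomputable def sphereMeasure (n : ℕ) : Measure (EuclideanSpace ℝ (Fin n)) :=
  (μH[(n:ℝ)-1]).restrict (Metric.sphere 0 1)


noncomputable def ft {d : ℕ} (u : EuclideanSpace ℝ (Fin d) → ℂ)
    (ξ : EuclideanSpace ℝ (Fin d)) : ℂ :=
  ∫ y, u y * Complex.exp (-(2 * π * Complex.I) * ((⟪y, ξ⟫_ℝ : ℝ) : ℂ))

noncomputable def extOp {n : ℕ} (μ : Measure (EuclideanSpace ℝ (Fin n)))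
    (g : EuclideanSpace ℝ (Fin n) → ℂ) (x : EuclideanSpace ℝ (Fin n)) : ℂ :=
  ∫ ξ, g ξ * Complex.exp (-(2 * π * Complex.I) * ((⟪x, ξ⟫_ℝ : ℝ) : ℂ)) ∂μ

/-!
Replacing `σ` by `σ_K = σ.restrict K` changes neither the orthonormality of the `g_j` nor their
extensions, so it suffices to treat an arbitrary finite measure `μ`. By Fubini,
`∫ |(g dμ)^|² w = ∫∫ g(θ) conj g(ω) ŵ(θ - ω) dμ(θ) dμ(ω)`, which is the inner product in
`L²(μ ⊗ μ)` of `e_j = conj g_j ⊗ g_j` with the kernel `k(θ, ω) = ŵ(θ - ω)`. The `e_j` are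
orthonormal, so by Bessel's inequality `r_j = ∫ |(g_j dμ)^|² w` satisfies `∑ r_j² ≤ ‖k‖²`, and
Cauchy–Schwarz in `ℓ²` concludes (the paper's Hilbert–Schmidt estimate, written with kernels).

That `σ` is a finite measure follows from covering the unit sphere by the images of the ball of
radius `2` under the two inverse stereographic projections from `±v`: they are smooth, hence
Lipschitz on that ball.
-/

open Metric Module
open scoped NNReal FourierTransform

section UnitSphere

variable {E : Type*} [NormedAddCommGroup E] [InnerProductSpace ℝ E] {m : ℕ}
  [Fact (finrank ℝ E = m + 1)]

lemma contDiff_stereographic'_symm (v : sphere (0 : E) 1) :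
    ContDiff ℝ 1 fun x => ((stereographic' m v).symm x : E) := by
  let U := (OrthonormalBasis.fromOrthogonalSpanSingleton (𝕜 := ℝ) m
    (ne_zero_of_mem_unit_sphere v)).repr
  have h : (fun x => ((stereographic' m v).symm x : E)) =
      stereoInvFunAux (v : E) ∘ (Submodule.subtypeL _ ∘ U.symm) := rfl
  rw [h]
  exact contDiff_stereoInvFunAux.comp ((Submodule.subtypeL _).contDiff.comp U.symm.contDiff)

lemma norm_stereographic'_le_two {v x : sphere (0 : E) 1} (hvx : ⟪(v : E), x⟫_ℝ ≤ 0) :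
    ‖stereographic' m v x‖ ≤ 2 := by
  let U := (OrthonormalBasis.fromOrthogonalSpanSingleton (𝕜 := ℝ) m
    (ne_zero_of_mem_unit_sphere v)).repr
  change ‖U (stereoToFun (v : E) x)‖ ≤ 2
  have hproj : ‖(ℝ ∙ (v : E))ᗮ.orthogonalProjectionOnto x‖ ≤ 1 :=
    (Submodule.norm_orthogonalProjectionOnto_apply_le _ _).trans (norm_eq_of_mem_sphere x).le
  rw [U.norm_map, stereoToFun_apply, norm_smul, innerSL_apply_apply, Real.norm_eq_abs,
    abs_div, abs_two, abs_of_pos (by linarith)]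
  calc 2 / (1 - ⟪(v : E), x⟫_ℝ) * ‖(ℝ ∙ (v : E))ᗮ.orthogonalProjectionOnto x‖ ≤ 2 / 1 * 1 := by
        gcongr; linarith
    _ = 2 := by norm_num

lemma sphere_subset_stereographic'_symm_image (v : sphere (0 : E) 1) :
    sphere (0 : E) 1 ⊆ (fun y => ((stereographic' m v).symm y : E)) '' closedBall 0 2 ∪
      (fun y => ((stereographic' m (-v)).symm y : E)) '' closedBall 0 2 := by
  intro x hx
  lift x to sphere (0 : E) 1 using hx
  have key : ∀ u : sphere (0 : E) 1, ⟪(u : E), x⟫_ℝ ≤ 0 →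
      (x : E) ∈ (fun y => ((stereographic' m u).symm y : E)) '' closedBall 0 2 := by
    intro u hux
    refine ⟨stereographic' m u x, mem_closedBall_zero_iff.2 (norm_stereographic'_le_two hux), ?_⟩
    have hxu : x ∈ (stereographic' m u).source := by
      rw [stereographic'_source]
      rintro rfl
      norm_num at hux
    simp [(stereographic' m u).left_inv hxu]
  rcases le_total ⟪(v : E), x⟫_ℝ 0 with h | h
  · exact Or.inl (key v h)
  · exact Or.inr (key (-v) (by simpa [inner_neg_left] using h))

lemma hausdorffMeasure_unit_sphere_lt_top [MeasurableSpace E] [BorelSpace E] :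
    μH[m] (sphere (0 : E) 1) < ⊤ := by
  have : Nontrivial E :=
    Module.nontrivial_of_finrank_eq_succ (R := ℝ) (Fact.out : finrank ℝ E = m + 1)
  obtain ⟨v, hv⟩ := (NormedSpace.sphere_nonempty (x := (0 : E))).2 zero_le_one
  have hchart : ∀ u : sphere (0 : E) 1,
      μH[m] ((fun y => ((stereographic' m u).symm y : E)) '' closedBall 0 2) < ⊤ := by
    intro u
    obtain ⟨K, hK⟩ := (contDiff_stereographic'_symm (m := m) u).locallyLipschitz.locallyLipschitzOn
      |>.exists_lipschitzOnWith_of_compact (isCompact_closedBall 0 2)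
    calc _ ≤ (K : ℝ≥0∞) ^ (m : ℝ) * μH[m] (closedBall (0 : EuclideanSpace ℝ (Fin m)) 2) :=
          hK.hausdorffMeasure_image_le m.cast_nonneg
      _ < ⊤ := ENNReal.mul_lt_top (by simp) (isCompact_closedBall _ _).measure_lt_top
  exact (measure_mono (sphere_subset_stereographic'_symm_image (m := m) ⟨v, hv⟩)).trans_lt
    (measure_union_lt_top (hchart _) (hchart _))

end UnitSphere

instance isFiniteMeasure_sphereMeasure (n : ℕ) : IsFiniteMeasure (sphereMeasure n) := by
  refine ⟨?_⟩
  rw [sphereMeasure, Measure.restrict_apply_univ]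
  cases n with
  | zero =>
    have : sphere (0 : EuclideanSpace ℝ (Fin 0)) 1 = ∅ := by
      ext x
      simp [Subsingleton.elim x 0]
    simp [this]
  | succ m =>
    have : Fact (finrank ℝ (EuclideanSpace ℝ (Fin (m + 1))) = m + 1) := ⟨finrank_euclideanSpace_fin⟩
    simpa using hausdorffMeasure_unit_sphere_lt_top (E := EuclideanSpace ℝ (Fin (m + 1))) (m := m)

section FourierPhase

variable {V : Type*} [NormedAddCommGroup V] [InnerProductSpace ℝ V]

noncomputable def fourierPhase (x ξ : V) : ℂ :=
  Complex.exp (-(2 * π * Complex.I) * ((⟪x, ξ⟫_ℝ : ℝ) : ℂ))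

lemma norm_fourierPhase (x ξ : V) : ‖fourierPhase x ξ‖ = 1 := by
  rw [fourierPhase,
    show -(2 * π * I) * ((⟪x, ξ⟫_ℝ : ℝ) : ℂ) = ((-(2 * π * ⟪x, ξ⟫_ℝ) : ℝ) : ℂ) * I by
      push_cast; ring]
  exact norm_exp_ofReal_mul_I _

lemma fourierPhase_sub (x θ ω : V) :
    fourierPhase x (θ - ω) = fourierPhase x θ * starRingEnd ℂ (fourierPhase x ω) := by
  rw [fourierPhase, fourierPhase, fourierPhase, ← Complex.exp_conj, ← Complex.exp_add,
    inner_sub_right]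
  congr 1
  simp only [map_mul, map_neg, map_ofNat, conj_ofReal, conj_I]
  push_cast
  ring

lemma continuous_fourierPhase : Continuous fun p : V × V => fourierPhase p.1 p.2 := by
  unfold fourierPhase
  fun_prop

end FourierPhase

section L2

variable {α : Type*} [MeasurableSpace α] {μ : Measure α}

lemma inner_toLp_eq_integral {f g : α → ℂ} (hf : MemLp f 2 μ) (hg : MemLp g 2 μ) :
    ⟪hf.toLp f, hg.toLp g⟫_ℂ = ∫ a, starRingEnd ℂ (f a) * g a ∂μ := by
  rw [L2.inner_def]
  refine integral_congr_ae ?_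
  filter_upwards [hf.coeFn_toLp, hg.coeFn_toLp] with a hfa hga
  rw [hfa, hga, RCLike.inner_apply, mul_comm]

lemma norm_toLp_sq_eq_integral {f : α → ℂ} (hf : MemLp f 2 μ) :
    ‖hf.toLp f‖ ^ 2 = ∫ a, ‖f a‖ ^ 2 ∂μ := by
  rw [@norm_sq_eq_re_inner ℂ, inner_toLp_eq_integral]
  simp_rw [conj_mul', ← ofReal_pow, integral_complex_ofReal]
  rfl

lemma summable_and_tsum_norm_integral_conj_mul_sq_le {ι : Type*} [DecidableEq ι] {e : ι → α → ℂ}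
    (he : ∀ i, MemLp (e i) 2 μ)
    (horth : ∀ i j, ∫ a, starRingEnd ℂ (e i a) * e j a ∂μ = if i = j then 1 else 0)
    {F : α → ℂ} (hF : MemLp F 2 μ) :
    Summable (fun i => ‖∫ a, starRingEnd ℂ (e i a) * F a ∂μ‖ ^ 2) ∧
      ∑' i, ‖∫ a, starRingEnd ℂ (e i a) * F a ∂μ‖ ^ 2 ≤ ∫ a, ‖F a‖ ^ 2 ∂μ := by
  have hON : Orthonormal ℂ fun i => (he i).toLp (e i) := by
    rw [orthonormal_iff_ite]
    intro i j
    rw [inner_toLp_eq_integral, horth]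
  simp_rw [← inner_toLp_eq_integral (he _) hF, ← norm_toLp_sq_eq_integral hF]
  exact ⟨hON.inner_products_summable _, hON.tsum_inner_products_le _⟩

lemma MemLp.mul_prod {β : Type*} [MeasurableSpace β] {ν : Measure β} [SFinite ν] {f : α → ℂ}
    {g : β → ℂ} (hf : MemLp f 2 μ) (hg : MemLp g 2 ν) :
    MemLp (fun p : α × β => f p.1 * g p.2) 2 (μ.prod ν) := by
  have haesm : AEStronglyMeasurable (fun p : α × β => f p.1 * g p.2) (μ.prod ν) :=
    hf.1.comp_fst.mul hg.1.comp_snd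
  rw [memLp_two_iff_integrable_sq_norm haesm]
  simpa only [norm_mul, mul_pow] using ((memLp_two_iff_integrable_sq_norm hf.1).1 hf).mul_prod
    ((memLp_two_iff_integrable_sq_norm hg.1).1 hg)

lemma integral_conj_mul_conj_mul_prod [SFinite μ] (f g : α → ℂ) :
    ∫ p, starRingEnd ℂ (starRingEnd ℂ (f p.1) * f p.2) * (starRingEnd ℂ (g p.1) * g p.2)
      ∂(μ.prod μ) = ((‖∫ a, starRingEnd ℂ (f a) * g a ∂μ‖ ^ 2 : ℝ) : ℂ) := by
  have hsplit : ∀ p : α × α,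
      starRingEnd ℂ (starRingEnd ℂ (f p.1) * f p.2) * (starRingEnd ℂ (g p.1) * g p.2) =
        starRingEnd ℂ (starRingEnd ℂ (f p.1) * g p.1) * (starRingEnd ℂ (f p.2) * g p.2) := by
    intro p
    simp only [map_mul, conj_conj]
    ring
  rw [integral_congr_ae (ae_of_all _ hsplit),
    integral_prod_mul (fun a => starRingEnd ℂ (starRingEnd ℂ (f a) * g a))
      (fun a => starRingEnd ℂ (f a) * g a), integral_conj, conj_mul', ofReal_pow]

end L2

lemma abs_tsum_mul_le_sqrt_mul_sqrt {ι : Type*} {f g : ι → ℝ} (hf : Summable fun i => f i ^ 2)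
    (hg : Summable fun i => g i ^ 2) :
    |∑' i, f i * g i| ≤ √(∑' i, f i ^ 2) * √(∑' i, g i ^ 2) := by
  have hholder := Real.summable_and_inner_le_Lp_mul_Lq_tsum_of_nonneg Real.HolderConjugate.two_two
    (f := fun i => |f i|) (g := fun i => |g i|) (fun i => abs_nonneg _) (fun i => abs_nonneg _)
    (by simpa only [Real.rpow_two, sq_abs] using hf)
    (by simpa only [Real.rpow_two, sq_abs] using hg)
  simp only [Real.rpow_two, sq_abs, ← abs_mul, ← Real.sqrt_eq_rpow] at hholder
  calc |∑' i, f i * g i| ≤ ∑' i, |f i * g i| := by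
        simpa only [Real.norm_eq_abs] using norm_tsum_le_tsum_norm (f := fun i => f i * g i)
          (by simpa only [Real.norm_eq_abs] using hholder.1)
    _ ≤ _ := hholder.2

section FourierExtension

variable {n : ℕ}

lemma ft_eq_fourier (u : EuclideanSpace ℝ (Fin n) → ℂ) : ft u = 𝓕 u := by
  ext ξ
  rw [Real.fourier_eq', ft]
  congr 1 with y
  rw [smul_eq_mul, mul_comm]
  congr 2
  push_cast
  ring

lemma continuous_ft {u : EuclideanSpace ℝ (Fin n) → ℂ} (hu : Integrable u) : Continuous (ft u) := by
  rw [ft_eq_fourier]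
  exact VectorFourier.fourierIntegral_continuous Real.continuous_fourierChar
    continuous_inner hu

lemma norm_ft_le (u : EuclideanSpace ℝ (Fin n) → ℂ) (ξ : EuclideanSpace ℝ (Fin n)) :
    ‖ft u ξ‖ ≤ ∫ y, ‖u y‖ := by
  rw [ft_eq_fourier]
  exact VectorFourier.norm_fourierIntegral_le_integral_norm _ _ _ _ _

lemma integral_norm_extOp_sq_mul (μ : Measure (EuclideanSpace ℝ (Fin n))) [SFinite μ]
    {G : EuclideanSpace ℝ (Fin n) → ℂ} (hG : Integrable G μ)
    {w : EuclideanSpace ℝ (Fin n) → ℝ} (hw : Integrable w) :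
    ((∫ x, ‖extOp μ G x‖ ^ 2 * w x : ℝ) : ℂ) =
      ∫ p, G p.1 * starRingEnd ℂ (G p.2) * ft (fun x => (w x : ℂ)) (p.1 - p.2) ∂(μ.prod μ) := by
  have hGc : Integrable (fun θ => starRingEnd ℂ (G θ)) μ :=
    memLp_one_iff_integrable.1 (memLp_one_iff_integrable.2 hG).star
  have hint : Integrable (fun q : EuclideanSpace ℝ (Fin n) ×
      (EuclideanSpace ℝ (Fin n) × EuclideanSpace ℝ (Fin n)) =>
        (w q.1 : ℂ) * (G q.2.1 * starRingEnd ℂ (G q.2.2)) * fourierPhase q.1 (q.2.1 - q.2.2))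
      (volume.prod (μ.prod μ)) :=
    (hw.ofReal.mul_prod (hG.mul_prod hGc)).mul_bdd (c := 1)
      (continuous_fourierPhase.comp
        (continuous_fst.prodMk (continuous_snd.fst.sub continuous_snd.snd))).aestronglyMeasurable
      (ae_of_all _ fun q => (norm_fourierPhase _ _).le)
  have hprod : ∀ x, ∫ p, (w x : ℂ) * (G p.1 * starRingEnd ℂ (G p.2)) * fourierPhase x (p.1 - p.2)
      ∂(μ.prod μ) = ((‖extOp μ G x‖ ^ 2 * w x : ℝ) : ℂ) := by
    intro x
    have hsplit : ∀ p : EuclideanSpace ℝ (Fin n) × EuclideanSpace ℝ (Fin n),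
        (w x : ℂ) * (G p.1 * starRingEnd ℂ (G p.2)) * fourierPhase x (p.1 - p.2) =
          (w x : ℂ) * (G p.1 * fourierPhase x p.1 *
            starRingEnd ℂ (G p.2 * fourierPhase x p.2)) := by
      intro p
      rw [fourierPhase_sub, map_mul]
      ring
    rw [integral_congr_ae (ae_of_all _ hsplit), integral_const_mul,
      integral_prod_mul (fun θ => G θ * fourierPhase x θ)
        (fun ω => starRingEnd ℂ (G ω * fourierPhase x ω)), integral_conj]
    have hE : ∫ θ, G θ * fourierPhase x θ ∂μ = extOp μ G x := rfl
    rw [hE, mul_conj']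
    push_cast
    ring
  have hvol : ∀ p : EuclideanSpace ℝ (Fin n) × EuclideanSpace ℝ (Fin n),
      ∫ x, (w x : ℂ) * (G p.1 * starRingEnd ℂ (G p.2)) * fourierPhase x (p.1 - p.2) =
        G p.1 * starRingEnd ℂ (G p.2) * ft (fun x => (w x : ℂ)) (p.1 - p.2) := by
    intro p
    rw [ft, ← integral_const_mul]
    congr 1 with x
    rw [fourierPhase]
    ring
  rw [← integral_complex_ofReal, ← integral_congr_ae (ae_of_all _ hprod),
    integral_integral_swap hint]
  exact integral_congr_ae (ae_of_all _ hvol)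

theorem abs_tsum_mul_integral_norm_extOp_sq_le {ι : Type*} [DecidableEq ι]
    (μ : Measure (EuclideanSpace ℝ (Fin n))) [IsFiniteMeasure μ]
    {g : ι → EuclideanSpace ℝ (Fin n) → ℂ} (hmem : ∀ j, MemLp (g j) 2 μ)
    (horth : ∀ j k, ∫ ξ, starRingEnd ℂ (g j ξ) * g k ξ ∂μ = if j = k then 1 else 0)
    {l : ι → ℝ} (hl : Summable fun j => l j ^ 2)
    {w : EuclideanSpace ℝ (Fin n) → ℝ} (hw : Integrable w) :
    |∑' j, l j * ∫ x, ‖extOp μ (g j) x‖ ^ 2 * w x| ≤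
      √(∑' j, l j ^ 2) * √(∫ θ, ∫ ω, ‖ft (fun x => (w x : ℂ)) (θ - ω)‖ ^ 2 ∂μ ∂μ) := by
  set k : EuclideanSpace ℝ (Fin n) × EuclideanSpace ℝ (Fin n) → ℂ :=
    fun p => ft (fun x => (w x : ℂ)) (p.1 - p.2)
  have hk : MemLp k 2 (μ.prod μ) :=
    MemLp.of_bound
      ((continuous_ft hw.ofReal).comp (continuous_fst.sub continuous_snd)).aestronglyMeasurable
      _ (ae_of_all _ fun p => norm_ft_le _ _)
  have he : ∀ j, MemLp (fun p : EuclideanSpace ℝ (Fin n) × EuclideanSpace ℝ (Fin n) =>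
      starRingEnd ℂ (g j p.1) * g j p.2) 2 (μ.prod μ) :=
    fun j => MemLp.mul_prod (hmem j).star (hmem j)
  have heorth : ∀ i j, ∫ p, starRingEnd ℂ (starRingEnd ℂ (g i p.1) * g i p.2) *
      (starRingEnd ℂ (g j p.1) * g j p.2) ∂(μ.prod μ) = if i = j then 1 else 0 := by
    intro i j
    rw [integral_conj_mul_conj_mul_prod, horth]
    split_ifs <;> simp
  have hr : ∀ j, ((∫ x, ‖extOp μ (g j) x‖ ^ 2 * w x : ℝ) : ℂ) =
      ∫ p, starRingEnd ℂ (starRingEnd ℂ (g j p.1) * g j p.2) * k p ∂(μ.prod μ) := by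
    intro j
    rw [integral_norm_extOp_sq_mul μ ((hmem j).integrable one_le_two) hw]
    simp only [k, map_mul, conj_conj]
  obtain ⟨hsum, hbessel⟩ := summable_and_tsum_norm_integral_conj_mul_sq_le he heorth hk
  simp_rw [← hr, norm_real, Real.norm_eq_abs, sq_abs] at hsum hbessel
  rw [integral_prod _ ((memLp_two_iff_integrable_sq_norm hk.1).1 hk)] at hbessel
  calc _ ≤ √(∑' j, l j ^ 2) * √(∑' j, (∫ x, ‖extOp μ (g j) x‖ ^ 2 * w x) ^ 2) :=
        abs_tsum_mul_le_sqrt_mul_sqrt hl hsum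
    _ ≤ _ := by gcongr

end FourierExtension

theorem statement19_general (n : ℕ) (g : ℕ → EuclideanSpace ℝ (Fin n) → ℂ)
    (hmem : ∀ j, MemLp (g j) 2 (sphereMeasure n))
    (horth : ∀ j k, (∫ ξ, (starRingEnd ℂ) (g j ξ) * g k ξ ∂(sphereMeasure n))
      = if j = k then 1 else 0)
    (l : ℕ → ℝ) (hl : Summable (fun j => l j ^ 2))
    (w : SchwartzMap (EuclideanSpace ℝ (Fin n)) ℝ)
    (K : Set (EuclideanSpace ℝ (Fin n)))
    (hsupp : ∀ j, Function.support (g j) ⊆ K) :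
    |∑' j, l j * ∫ x, ‖extOp (sphereMeasure n) (g j) x‖ ^ 2 * w x|
      ≤ Real.sqrt (∑' j, l j ^ 2) *
        Real.sqrt (∫ θ in K, ∫ ω in K,
          ‖ft (fun x => (w x : ℂ)) (θ - ω)‖ ^ 2
            ∂(sphereMeasure n) ∂(sphereMeasure n)) := by
  have hoff : ∀ j, ∀ ξ ∉ K, g j ξ = 0 := fun j ξ hξ => notMem_support.1 fun h => hξ (hsupp j h)
  have hext : ∀ j, extOp (sphereMeasure n) (g j) = extOp ((sphereMeasure n).restrict K) (g j) :=
    fun j => funext fun x => (setIntegral_eq_integral_of_forall_compl_eq_zero fun ξ hξ => by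
      simp [hoff j ξ hξ]).symm
  have horthK : ∀ j k, ∫ ξ in K, starRingEnd ℂ (g j ξ) * g k ξ ∂(sphereMeasure n) =
      if j = k then 1 else 0 := fun j k => by
    rw [setIntegral_eq_integral_of_forall_compl_eq_zero fun ξ hξ => by simp [hoff j ξ hξ], horth]
  simp_rw [hext]
  exact abs_tsum_mul_integral_norm_extOp_sq_le _ (fun j => (hmem j).restrict K) horthK hl
    w.integrable

theorem statement19 (n : ℕ) (g : ℕ → EuclideanSpace ℝ (Fin n) → ℂ)
    (hmem : ∀ j, MemLp (g j) 2 (sphereMeasure n))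
    (horth : ∀ j k, (∫ ξ, (starRingEnd ℂ) (g j ξ) * g k ξ ∂(sphereMeasure n))
      = if j = k then 1 else 0)
    (l : ℕ → ℝ) (hl : Summable (fun j => l j ^ 2))
    (w : SchwartzMap (EuclideanSpace ℝ (Fin n)) ℝ)
    (K : Set (EuclideanSpace ℝ (Fin n))) (hKs : K ⊆ Metric.sphere 0 1)
    (hKm : MeasurableSet K) (hsupp : ∀ j, Function.support (g j) ⊆ K) :
    |∑' j, l j * ∫ x, ‖extOp (sphereMeasure n) (g j) x‖ ^ 2 * w x|
      ≤ Real.sqrt (∑' j, l j ^ 2) *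
        Real.sqrt (∫ θ in K, ∫ ω in K,
          ‖ft (fun x => (w x : ℂ)) (θ - ω)‖ ^ 2
            ∂(sphereMeasure n) ∂(sphereMeasure n)) :=
  statement19_general n g hmem horth l hl w K hsupp
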